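/- Let G be a finite simple graph, x a C3-free vertex of G with closed neighborhood X = N[x], let π be a permutation of V(G) fixing every vertex outside X, moving every vertex of X, and having no 2-cycles inside X, and let A = A1 ∪ A2 be a separable γ-set of G that is effective under π. Then |A1 ∩ X| ≤ 1 and |A2 ∩ X| ≤ 1; in particular |A ∩ X| ≤ 2. -/

import Mathlib

open SimpleGraph

variable {V : Type*}

/-- `D` is a dominating set of `G`: every vertex is in `D` or adjacent to a vertex of `D`. -/
def IsDomSet (G : SimpleGraph V) (D : Set V) : Prop :=
  ∀ v : V, ∃ d ∈ D, d = v ∨ G.Adj d v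

/-- The domination number of `G`: minimum cardinality of a dominating set. -/
noncomputable def domNum (G : SimpleGraph V) : ℕ :=
  sInf {n | ∃ D : Set V, IsDomSet G D ∧ D.ncard = n}

/-- The prism `πG` of `G`: two disjoint copies of `G` together with the matching
`{u (π u) : u ∈ V(G)}`, the second copy playing the role of `G'`. -/
def prism (G : SimpleGraph V) (π : Equiv.Perm V) : SimpleGraph (V ⊕ V) where
  Adj a b :=
    match a, b with
    | Sum.inl u, Sum.inl v => G.Adj u v
    | Sum.inr u, Sum.inr v => G.Adj u v
    | Sum.inl u, Sum.inr v => π u = v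
    | Sum.inr u, Sum.inl v => π v = u
  symm := ⟨by
    rintro (u | u) (v | v) h
    · exact G.adj_symm h
    · exact h
    · exact h
    · exact G.adj_symm h⟩
  loopless := ⟨by
    rintro (u | u) h
    · exact G.irrefl h
    · exact G.irrefl h⟩

/-- The closed neighborhood `N[v]` of a vertex. -/
def closedNbhd (G : SimpleGraph V) (v : V) : Set V :=
  insert v (G.neighborSet v)

/-- `x` is a `C₃`-free vertex: non-isolated and belonging to no triangle of `G`. -/
def C3Free (G : SimpleGraph V) (x : V) : Prop :=
  (∃ y, G.Adj x y) ∧ ∀ u v : V, G.Adj x u → G.Adj x v → ¬ G.Adj u v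

/-- `A = A1 ∪ A2` is a separable γ-set of `G` (an `A1`-γ-set): `A1, A2` are nonempty,
disjoint, `A` is a γ-set, and `A1` dominates `V(G) - A`. -/
def SepGammaSet (G : SimpleGraph V) (A1 A2 : Set V) : Prop :=
  A1.Nonempty ∧ A2.Nonempty ∧ Disjoint A1 A2 ∧
  IsDomSet G (A1 ∪ A2) ∧ (A1 ∪ A2).ncard = domNum G ∧
  ∀ v ∉ A1 ∪ A2, ∃ u ∈ A1, G.Adj u v

/-- The separable γ-set `A = A1 ∪ A2` is effective under `π`: `π(A)` is a γ-set of the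
copy `G'` of `G` (identified with `G`) whose dominating part is `B2' = π(A2)`,
i.e. `π(A2)` dominates `V(G') - π(A)`. -/
def Effective (G : SimpleGraph V) (π : Equiv.Perm V) (A1 A2 : Set V) : Prop :=
  IsDomSet G (⇑π '' (A1 ∪ A2)) ∧ (⇑π '' (A1 ∪ A2)).ncard = domNum G ∧
  ∀ v ∉ ⇑π '' (A1 ∪ A2), ∃ u ∈ ⇑π '' A2, G.Adj u v

/-- The star `K_{1,m}` on `Fin (m+1)`, with center `0` adjacent to the `m` leaves. -/
def starGraph (m : ℕ) : SimpleGraph (Fin (m + 1)) where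
  Adj a b := (a = 0 ∧ b ≠ 0) ∨ (b = 0 ∧ a ≠ 0)
  symm := ⟨fun a b h => Or.symm h⟩
  loopless := ⟨fun a h => by rcases h with ⟨h1, h2⟩ | ⟨h1, h2⟩ <;> exact h2 h1⟩

/-!
Let `X = N[x]` and let `B ⊆ A` be the dominating part of a separable γ-set `A`. Replacing
`(A \ B) ∩ X` by the single vertex `x` still gives a dominating set: `x` dominates `X`, and every
vertex outside `X ∪ A` is dominated by `B`. Minimality of `A` then forces `|(A \ B) ∩ X| ≤ 1`.
For `A2` apply this to `A` with `B = A1`; for `A1` apply it to the γ-set `π(A)` with `B = π(A2)`,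
which is legitimate because `π` fixes every vertex outside `X`, hence maps `X` onto itself.
-/

lemma domNum_le_ncard {G : SimpleGraph V} {D : Set V} (hD : IsDomSet G D) :
    domNum G ≤ D.ncard :=
  Nat.sInf_le ⟨D, hD, rfl⟩

lemma isDomSet_insert_of_dominates_compl_closedNbhd {G : SimpleGraph V} {x : V} {D : Set V}
    (hD : ∀ v ∉ closedNbhd G x, ∃ d ∈ D, d = v ∨ G.Adj d v) : IsDomSet G (insert x D) := by
  intro v
  by_cases hv : v ∈ closedNbhd G x
  · refine ⟨x, Set.mem_insert x D, ?_⟩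
    rcases hv with rfl | hadj
    exacts [Or.inl rfl, Or.inr hadj]
  · obtain ⟨d, hd, hdv⟩ := hD v hv
    exact ⟨d, Set.mem_insert_of_mem x hd, hdv⟩

lemma ncard_sdiff_inter_closedNbhd_le_one {G : SimpleGraph V} {A B : Set V} (hA : A.Finite)
    (hmin : A.ncard ≤ domNum G) (hBA : B ⊆ A) (hB : ∀ v ∉ A, ∃ u ∈ B, G.Adj u v) (x : V) :
    ((A \ B) ∩ closedNbhd G x).ncard ≤ 1 := by
  set X := closedNbhd G x
  have hdom : IsDomSet G (insert x (B ∪ ((A \ B) \ X))) := by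
    refine isDomSet_insert_of_dominates_compl_closedNbhd fun v hvX => ?_
    by_cases hvA : v ∈ A
    · by_cases hvB : v ∈ B
      · exact ⟨v, Or.inl hvB, Or.inl rfl⟩
      · exact ⟨v, Or.inr ⟨⟨hvA, hvB⟩, hvX⟩, Or.inl rfl⟩
    · obtain ⟨u, hu, hadj⟩ := hB v hvA
      exact ⟨u, Or.inl hu, Or.inr hadj⟩
  have hsplitB := Set.ncard_sdiff_add_ncard_of_subset hBA hA
  have hsplitX := Set.ncard_inter_add_ncard_sdiff_eq_ncard (A \ B) X hA.sdiff
  have hD := (domNum_le_ncard hdom).trans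
    ((Set.ncard_insert_le _ _).trans (Nat.add_le_add_right (Set.ncard_union_le _ _) 1))
  omega

theorem effective_inter_closedNbhd_small_general [Fintype V] (G : SimpleGraph V) (x : V)
    (π : Equiv.Perm V)
    (hfix : ∀ v ∉ closedNbhd G x, π v = v)
    (A1 A2 : Set V) (hsep : SepGammaSet G A1 A2) (heff : Effective G π A1 A2) :
    (A1 ∩ closedNbhd G x).ncard ≤ 1 ∧ (A2 ∩ closedNbhd G x).ncard ≤ 1 ∧
      ((A1 ∪ A2) ∩ closedNbhd G x).ncard ≤ 2 := by
  obtain ⟨-, -, hdisj, -, hcard, hdom1⟩ := hsep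
  obtain ⟨-, hcard', hdom2⟩ := heff
  have hA2 : (A2 ∩ closedNbhd G x).ncard ≤ 1 := by
    have := ncard_sdiff_inter_closedNbhd_le_one (Set.toFinite _) hcard.le
      Set.subset_union_left hdom1 x
    rwa [Set.union_sdiff_cancel_left (Set.disjoint_iff.mp hdisj)] at this
  have hA1 : (A1 ∩ closedNbhd G x).ncard ≤ 1 := by
    have := ncard_sdiff_inter_closedNbhd_le_one (Set.toFinite _) hcard'.le
      (Set.image_mono Set.subset_union_right) hdom2 x
    have hX : π '' closedNbhd G x = closedNbhd G x :=
      Set.image_perm fun v hv => by_contra fun hvX => hv (hfix v hvX)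
    rwa [← Set.image_sdiff π.injective, Set.union_sdiff_cancel_right (Set.disjoint_iff.mp hdisj),
      ← hX, ← Set.image_inter π.injective, Set.ncard_image_of_injective _ π.injective] at this
  refine ⟨hA1, hA2, ?_⟩
  rw [Set.union_inter_distrib_right]
  exact (Set.ncard_union_le _ _).trans (by omega)

/-- under the hypotheses of the main construction, an effective separable
γ-set meets `X = N[x]` in at most one vertex of `A1` and at most one of `A2`. -/
theorem effective_inter_closedNbhd_small [Fintype V] (G : SimpleGraph V) (x : V)
    (hx : C3Free G x) (π : Equiv.Perm V)
    (hfix : ∀ v ∉ closedNbhd G x, π v = v)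
    (hmove : ∀ v ∈ closedNbhd G x, π v ≠ v)
    (h2cyc : ∀ u ∈ closedNbhd G x, ∀ v ∈ closedNbhd G x, π v = u → π u ≠ v)
    (A1 A2 : Set V) (hsep : SepGammaSet G A1 A2) (heff : Effective G π A1 A2) :
    (A1 ∩ closedNbhd G x).ncard ≤ 1 ∧ (A2 ∩ closedNbhd G x).ncard ≤ 1 ∧
      ((A1 ∪ A2) ∩ closedNbhd G x).ncard ≤ 2 :=
  effective_inter_closedNbhd_small_general G x π hfix A1 A2 hsep heff
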